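/- Let K be a field with char K ≠ 2, and let G be a finite subgroup of the group of K-algebra automorphisms of the formal power series ring K⟦X⟧ such that σ ∘ σ is the identity for every σ ∈ G (i.e. G is an elementary abelian 2-group). Then the cardinality of G is at most 2. -/

import Mathlib

/-!
A `K`-algebra automorphism `σ` of `K⟦X⟧` maps `X` to a series without constant term, so
`σ ↦ coeff 1 (σ X)` is a group homomorphism to `Kˣ`. When `2 ≠ 0` the only involution in its
kernel is the identity, so it embeds an elementary abelian `2`-group of automorphisms into the
square roots of unity `{1, -1}`.
-/

open PowerSeries

namespace PowerSeries

section AlgHom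

variable {R : Type*} [CommRing R] {φ : R⟦X⟧ →ₐ[R] R⟦X⟧}

theorem constantCoeff_algHom_apply (hφ : constantCoeff (φ X) = 0) (f : R⟦X⟧) :
    constantCoeff (φ f) = constantCoeff f := by
  conv_lhs => rw [eq_X_mul_shift_add_const f, C_eq_algebraMap, map_add, AlgHom.commutes]
  simp [hφ]

theorem coeff_algHom_apply_X_pow_mul (hφ : constantCoeff (φ X) = 0) (n : ℕ) (h : R⟦X⟧) :
    coeff n (φ (X ^ n * h)) = coeff 1 (φ X) ^ n * constantCoeff h := by
  obtain ⟨u, hu⟩ := X_dvd_iff.mpr hφ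
  have hu1 : coeff 1 (φ X) = constantCoeff u := by
    rw [hu, coeff_succ_X_mul, coeff_zero_eq_constantCoeff]
  have := coeff_X_pow_mul (u ^ n * φ h) n 0
  rw [zero_add, ← mul_assoc, ← mul_pow, ← hu] at this
  rw [map_mul, map_pow, this, hu1, coeff_zero_eq_constantCoeff, map_mul, map_pow,
    constantCoeff_algHom_apply hφ]

theorem coeff_one_algHom_apply_apply_X {ψ : R⟦X⟧ →ₐ[R] R⟦X⟧} (hφ : constantCoeff (φ X) = 0)
    (hψ : constantCoeff (ψ X) = 0) :
    coeff 1 (φ (ψ X)) = coeff 1 (φ X) * coeff 1 (ψ X) := by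
  obtain ⟨v, hv⟩ := X_dvd_iff.mpr hψ
  have := coeff_algHom_apply_X_pow_mul hφ 1 v
  rw [pow_one, pow_one, ← hv] at this
  rw [this, hv, coeff_succ_X_mul, coeff_zero_eq_constantCoeff]

theorem algHom_apply_eq_self_of_apply_X_eq_X (hφ : φ X = X) (f : R⟦X⟧) : φ f = f := by
  ext k
  induction k generalizing f with
  | zero => simp [constantCoeff_algHom_apply (φ := φ) (by simp [hφ])]
  | succ k ih =>
    conv_lhs => rw [eq_X_mul_shift_add_const f, C_eq_algebraMap, map_add, AlgHom.commutes]
    simp [hφ, ih]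

end AlgHom

section Field

variable {K : Type*} [Field K]

theorem constantCoeff_algEquiv_apply_X (σ : K⟦X⟧ ≃ₐ[K] K⟦X⟧) : constantCoeff (σ X) = 0 := by
  by_contra h
  have hX : IsUnit (X : K⟦X⟧) := by
    simpa using (isUnit_iff_constantCoeff.mpr (Ne.isUnit h)).map σ.symm
  simpa using isUnit_constantCoeff _ hX

noncomputable def linearCoeff : (K⟦X⟧ ≃ₐ[K] K⟦X⟧) →* Kˣ :=
  MonoidHom.toHomUnits
    { toFun σ := coeff 1 (σ X)
      map_one' := coeff_one_X
      map_mul' σ τ := coeff_one_algHom_apply_apply_X (φ := σ.toAlgHom) (ψ := τ.toAlgHom)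
        (constantCoeff_algEquiv_apply_X σ) (constantCoeff_algEquiv_apply_X τ) }

theorem coe_linearCoeff (σ : K⟦X⟧ ≃ₐ[K] K⟦X⟧) : (linearCoeff σ : K) = coeff 1 (σ X) := rfl

/-- If `σ X = X + g` with `g ≠ 0` of order `n`, then `σ g ≡ g` mod `X ^ (n + 1)` since `σ` is
tangent to the identity, while `σ g = -g` since `σ` is an involution. -/
theorem eq_one_of_mul_self_eq_one_of_linearCoeff_eq_one (h2 : (2 : K) ≠ 0)
    {σ : K⟦X⟧ ≃ₐ[K] K⟦X⟧} (hσ : σ * σ = 1) (h1 : linearCoeff σ = 1) : σ = 1 := by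
  set g := σ X - X
  have hg : g = 0 := by
    by_contra hg
    set n := g.order.toNat
    obtain ⟨h, hh⟩ := X_pow_order_dvd (φ := g)
    have hlead : coeff n g = constantCoeff h := by
      rw [hh, ← zero_add n, coeff_X_pow_mul, coeff_zero_eq_constantCoeff]
    have hfix : coeff n (σ g) = coeff n g := by
      have := coeff_algHom_apply_X_pow_mul (φ := σ.toAlgHom) (constantCoeff_algEquiv_apply_X σ) n h
      rw [← hh] at this
      simpa [← coe_linearCoeff, h1, hlead] using this
    have hanti : σ g = -g := by
      have hσσ : σ (σ X) = X := by rw [← AlgEquiv.mul_apply, hσ, AlgEquiv.one_apply]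
      rw [map_sub, hσσ, neg_sub]
    have htwice : (2 : K) * coeff n g = 0 :=
      calc (2 : K) * coeff n g = coeff n (σ g) + coeff n g := by rw [two_mul, hfix]
        _ = 0 := by rw [hanti, map_neg, neg_add_cancel]
    exact coeff_order hg ((mul_eq_zero.mp htwice).resolve_left h2)
  exact AlgEquiv.ext (algHom_apply_eq_self_of_apply_X_eq_X (φ := σ.toAlgHom) (sub_eq_zero.mp hg))

end Field

end PowerSeries

theorem powerSeries_aut_two_torsion_card_general (K : Type*) [Field K] (hK : ringChar K ≠ 2)
    (G : Subgroup (PowerSeries K ≃ₐ[K] PowerSeries K))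
    (hG : ∀ σ ∈ G, σ * σ = 1) :
    Nat.card G ≤ 2 := by
  have h2 : (2 : K) ≠ 0 := Ring.two_ne_zero hK
  let c : G →* Kˣ := linearCoeff.comp G.subtype
  have hc : Function.Injective c := (injective_iff_map_eq_one c).mpr fun σ hσ =>
    Subtype.ext (eq_one_of_mul_self_eq_one_of_linearCoeff_eq_one h2 (hG σ σ.2) hσ)
  have hroots (σ : G) : c σ ∈ rootsOfUnity 2 K := by
    rw [mem_rootsOfUnity, pow_two, ← map_mul, show σ * σ = 1 from Subtype.ext (hG σ σ.2), map_one]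
  calc Nat.card G ≤ Nat.card (rootsOfUnity 2 K) :=
        Nat.card_le_card_of_injective (fun σ => ⟨c σ, hroots σ⟩)
          fun σ τ h => hc (congrArg Subtype.val h)
    _ ≤ 2 := card_rootsOfUnity K 2

/-- Let `K` be a field with `char K ≠ 2` and let `G` be a finite subgroup of the group
of `K`-algebra automorphisms of `K⟦X⟧` such that `σ ∘ σ` is the identity for every
`σ ∈ G` (i.e. `G` is an elementary abelian `2`-group).  Then `#G ≤ 2`. -/
theorem powerSeries_aut_two_torsion_card (K : Type*) [Field K] (hK : ringChar K ≠ 2)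
    (G : Subgroup (PowerSeries K ≃ₐ[K] PowerSeries K)) [Finite G]
    (hG : ∀ σ ∈ G, σ * σ = 1) :
    Nat.card G ≤ 2 :=
  powerSeries_aut_two_torsion_card_general K hK G hG
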